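/- arXiv:1203.5658 — 5 statements merged into one kernel-verified Lean document; each statement's English description precedes it below -/
import Mathlib

section
/- Let G be a finite group acting on a chain complex C of abelian groups (each group element acting as a chain map, with the action compatible with composition). Let C/G denote the subcomplex whose d-th group consists of all elements of the form [c] = Σ_{g∈G} g·c for c ∈ C_d. If the homology H_d(C/G) contains an element of order q (a positive integer), then H_d(C) contains an element of order q/gcd(q,|G|). In particular, if q and |G| are coprime, then H_d(C) contains an element of order q. -/
/-!
The norm map `N = ∑ g, ρ g` satisfies `N ≫ N = |G| • N`, so if `N = e ≫ ι` is its image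
factorisation then `ι ≫ e = |G| • 𝟙`, since `ι` is mono and `e` is epi. On homology the maps
`u = H(ι)` and `v = H(e)` therefore satisfy `v ∘ u = |G| • id`. If `x` has order `q`, then
`|G| • x = v (u x)` has order `q / gcd(q, |G|)`, which divides the finite order of `u x`, and a
suitable multiple of `u x` has exactly that order.
-/

open CategoryTheory CategoryTheory.Limits

theorem exists_addOrderOf_eq_div_gcd_of_comp_eq_nsmul {A B : Type*} [AddMonoid A] [AddMonoid B]
    (u : A →+ B) (v : B →+ A) (n : ℕ) (hvu : ∀ a, v (u a) = n • a) {x : A}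
    (hx : addOrderOf x ≠ 0) :
    ∃ y : B, addOrderOf y = addOrderOf x / (addOrderOf x).gcd n := by
  have hux : addOrderOf (u x) ≠ 0 := fun h0 =>
    hx (Nat.eq_zero_of_zero_dvd (h0 ▸ addOrderOf_map_dvd u x))
  have hdvd : addOrderOf x / (addOrderOf x).gcd n ∣ addOrderOf (u x) := by
    rw [← (addOrderOf_pos_iff.mp (Nat.pos_of_ne_zero hx)).addOrderOf_nsmul, ← hvu]
    exact addOrderOf_map_dvd v (u x)
  exact ⟨_, addOrderOf_nsmul_addOrderOf_sub hux hdvd⟩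

section Norm

variable {𝒞 : Type*} [Category 𝒞] [Preadditive 𝒞] {X : 𝒞} {G : Type*} [Group G] [Fintype G]

theorem comp_sum_monoidHom_End (ρ : G →* End X) (g : G) :
    (ρ g : X ⟶ X) ≫ ∑ h : G, (ρ h : X ⟶ X) = ∑ h : G, (ρ h : X ⟶ X) := by
  rw [Preadditive.comp_sum]
  exact Fintype.sum_equiv (Equiv.mulRight g) _ _ fun h => by
    rw [Equiv.coe_mulRight, map_mul]; rfl

theorem sum_comp_sum_monoidHom_End (ρ : G →* End X) :
    (∑ g : G, (ρ g : X ⟶ X)) ≫ ∑ g : G, (ρ g : X ⟶ X) =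
      Fintype.card G • ∑ g : G, (ρ g : X ⟶ X) := by
  simp only [Preadditive.sum_comp, comp_sum_monoidHom_End, Finset.sum_const, Finset.card_univ]

end Norm

theorem image_ι_comp_factorThruImage_eq_nsmul {𝒞 : Type*} [Category 𝒞] [Preadditive 𝒞] {X : 𝒞}
    (f : X ⟶ X) [HasImage f] [Epi (factorThruImage f)] (n : ℕ) (hf : f ≫ f = n • f) :
    image.ι f ≫ factorThruImage f = n • 𝟙 (image f) := by
  rw [← cancel_mono (image.ι f), ← cancel_epi (factorThruImage f)]
  simp only [Category.assoc, image.fac, Preadditive.nsmul_comp, Preadditive.comp_nsmul,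
    Category.id_comp]
  rw [← Category.assoc, image.fac, hf]

theorem HomologicalComplex.homologyMap_comp_eq_nsmul {𝒞 ι : Type*} [Category 𝒞] [Preadditive 𝒞]
    [CategoryWithHomology 𝒞] {c : ComplexShape ι} {K L : HomologicalComplex 𝒞 c}
    (f : K ⟶ L) (g : L ⟶ K) (n : ℕ) (hfg : f ≫ g = n • 𝟙 K) (i : ι) :
    homologyMap f i ≫ homologyMap g i = n • 𝟙 (K.homology i) := by
  rw [← homologyMap_comp, hfg, ← homologyFunctor_map, Functor.map_nsmul,
    CategoryTheory.Functor.map_id]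
  rfl

theorem HomologicalComplex.exists_homology_addOrderOf_eq_div_gcd {ι : Type*} {c : ComplexShape ι}
    {K L : HomologicalComplex AddCommGrpCat c} (f : K ⟶ L) (g : L ⟶ K) (n : ℕ)
    (hfg : f ≫ g = n • 𝟙 K) (i : ι) {x : K.homology i} (hx : addOrderOf x ≠ 0) :
    ∃ y : L.homology i, addOrderOf y = addOrderOf x / (addOrderOf x).gcd n := by
  refine exists_addOrderOf_eq_div_gcd_of_comp_eq_nsmul (homologyMap f i).hom
    (homologyMap g i).hom n (fun a => ?_) hx
  simpa using ConcreteCategory.congr_hom (homologyMap_comp_eq_nsmul f g n hfg i) a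

/-- Let a finite group `G` act on a chain complex `C` of abelian groups by chain
maps (`ρ` is a monoid homomorphism into the endomorphisms of `C`, so the action is
compatible with composition).  The subcomplex `C/G` consists of the symmetrized
chains `[c] = Σ_{g∈G} g·c`, i.e. it is the image of the chain map `N = Σ_{g∈G} ρ g`.
If `H_d(C/G)` contains an element of order `q > 0`, then `H_d(C)` contains an
element of order `q / gcd(q, |G|)`; in particular, if `q` and `|G|` are coprime,
then `H_d(C)` contains an element of order `q`. -/
theorem stmt_0 (G : Type) [Group G] [Fintype G]
    (C : ChainComplex AddCommGrpCat ℤ) (ρ : G →* CategoryTheory.End C)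
    (d : ℤ) (q : ℕ) (hq : 0 < q)
    (h : ∃ x : ((Limits.image (∑ g : G, (ρ g : C ⟶ C))).homology d),
      addOrderOf x = q) :
    (∃ y : (C.homology d), addOrderOf y = q / Nat.gcd q (Fintype.card G)) ∧
    (Nat.Coprime q (Fintype.card G) → ∃ y : (C.homology d), addOrderOf y = q) := by
  obtain ⟨x, hx⟩ := h
  have hsplit := image_ι_comp_factorThruImage_eq_nsmul _ _ (sum_comp_sum_monoidHom_End ρ)
  obtain ⟨y, hy⟩ := HomologicalComplex.exists_homology_addOrderOf_eq_div_gcd _ _ _ hsplit d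
    (x := x) (by omega)
  rw [hx] at hy
  exact ⟨⟨y, hy⟩, fun hcop => ⟨y, by rwa [hcop.gcd_eq_one, Nat.div_one] at hy⟩⟩
end

section
/- The 4×4 integer matrix M = [[2,−1,0,0],[−1,0,−1,0],[0,−2,1,0],[2,0,0,1]] has determinant −5, and consequently the cokernel of the ℤ-linear map ℤ⁴ → ℤ⁴ given by M is a cyclic group of order 5. -/
/-!
The row vector `v = (3, 1, 1, 0)` satisfies `v M = 5 (1, -1, 0, 0)`, so `x ↦ v ⬝ x mod 5` is a
surjection `ℤ⁴ → ℤ/5` vanishing on the image of `M`. Conversely, when `5 ∣ v ⬝ x` the rational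
solution `M⁻¹ x` of `M y = x` is integral, so the image of `M` is exactly the kernel of that
surjection and the cokernel is `ℤ/5`.
-/

/-- The boundary matrix in degree 5 of the quotient chain complex of the matching
complex `M₁₄` under the action of `S₂ × (S₃ ≀ S₄)`. -/
def jonssonMatrix : Matrix (Fin 4) (Fin 4) ℤ :=
  !![2, -1, 0, 0;
     -1, 0, -1, 0;
     0, -2, 1, 0;
     2, 0, 0, 1]

open Matrix

def jonssonCovector : Fin 4 → ℤ := ![3, 1, 1, 0]

lemma jonssonMatrix_det : jonssonMatrix.det = -5 := by
  simp [jonssonMatrix, det_succ_row_zero, Fin.sum_univ_succ, Fin.succAbove]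

lemma jonssonCovector_vecMul : jonssonCovector ᵥ* jonssonMatrix = ![5, -5, 0, 0] := by
  decide

lemma jonssonCovector_dotProduct_mulVec (y : Fin 4 → ℤ) :
    jonssonCovector ⬝ᵥ (jonssonMatrix *ᵥ y) = 5 * (y 0 - y 1) := by
  rw [dotProduct_mulVec, jonssonCovector_vecMul]
  simp [dotProduct, Fin.sum_univ_four, mul_sub, ← sub_eq_add_neg]

-- The witness is `M⁻¹ x`, with `5 k` written for `3 x₀ + x₁ + x₂`.
lemma jonssonMatrix_mulVec_eq (x : Fin 4 → ℤ) (k : ℤ) (hk : jonssonCovector ⬝ᵥ x = 5 * k) :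
    jonssonMatrix *ᵥ ![x 0 - k, x 0 - 2 * k, 2 * x 0 - 4 * k + x 2, -2 * x 0 + 2 * k + x 3] = x := by
  simp only [jonssonCovector, dotProduct, Fin.sum_univ_four] at hk
  ext i
  fin_cases i <;> simp [jonssonMatrix, mulVec, dotProduct, Fin.sum_univ_four] at hk ⊢ <;> linarith

def jonssonFunctional : (Fin 4 → ℤ) →ₗ[ℤ] ZMod 5 :=
  (Int.castAddHom (ZMod 5)).toIntLinearMap ∘ₗ dotProductBilin ℤ ℤ jonssonCovector

lemma jonssonFunctional_apply (x : Fin 4 → ℤ) :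
    jonssonFunctional x = ((jonssonCovector ⬝ᵥ x : ℤ) : ZMod 5) := rfl

lemma jonssonFunctional_surjective : Function.Surjective jonssonFunctional := by
  intro z
  refine ⟨Pi.single 1 (z.val : ℤ), ?_⟩
  simp [jonssonFunctional_apply, jonssonCovector]

lemma ker_jonssonFunctional :
    LinearMap.ker jonssonFunctional = LinearMap.range (toLin' jonssonMatrix) := by
  ext x
  simp only [LinearMap.mem_ker, LinearMap.mem_range, toLin'_apply, jonssonFunctional_apply,
    ZMod.intCast_zmod_eq_zero_iff_dvd]
  constructor
  · rintro ⟨k, hk⟩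
    exact ⟨_, jonssonMatrix_mulVec_eq x k hk⟩
  · rintro ⟨y, rfl⟩
    rw [jonssonCovector_dotProduct_mulVec]
    exact dvd_mul_right _ _

/-- The matrix has determinant `-5`, and the cokernel of the associated `ℤ`-linear map
`ℤ⁴ → ℤ⁴` is a cyclic group of order `5`. -/
theorem stmt_3 :
    jonssonMatrix.det = -5 ∧
    Nonempty (((Fin 4 → ℤ) ⧸ LinearMap.range (Matrix.toLin' jonssonMatrix)) ≃+ ZMod 5) :=
  ⟨jonssonMatrix_det, ⟨((Submodule.quotEquivOfEq _ _ ker_jonssonFunctional.symm).trans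
      (jonssonFunctional.quotKerEquivOfSurjective jonssonFunctional_surjective)).toAddEquiv⟩⟩
end

section
/- Let V be a finite totally ordered set, E a set of unordered pairs (possibly loops) of elements of V (elements x, y 'commute' if {x,y} ∈ E, and 'anticommute' otherwise), and Δ a family of finite multisets over V satisfying: (A) if σ, τ ∈ Δ and σ ⊆ ρ ⊆ τ then ρ ∈ Δ; (B) if σ ∈ Δ, x and y commute, and {x,y} ⊆ σ, then σ∖{x,y} ∉ Δ; (C) any element appearing with multiplicity at least 2 in some σ ∈ Δ commutes with itself. For a coefficient ring R, let C_d be the free R-module on multisets in Δ of size d+1, with generator x₀⊗⋯⊗x_d for σ = {x₀ ≤ ⋯ ≤ x_d} ∈ Δ (and set to 0 if σ ∉ Δ). Define ∂(x₀⊗⋯⊗x_d) = Σ_{i=0}^{d} (−1)^{d−η_i} · (x₀⊗⋯⊗x̂_i⊗⋯⊗x_d), where η_i is the number of indices j > i such that x_i and x_j anticommute. Then ∂∘∂ = 0, i.e., (C_*, ∂) is a chain complex. -/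
open scoped Classical

noncomputable section

variable {V : Type*} [LinearOrder V]

/-- The chain group in "size" `s`: the free `R`-module on the multisets of size
`s` belonging to the family `Δ` (multisets not in `Δ` correspond to the zero
generator). -/
abbrev multisetChains (R : Type*) [CommRing R] (Δ : Set (Multiset V)) (s : ℕ) : Type _ :=
  {σ : Multiset V // σ ∈ Δ ∧ Multiset.card σ = s} →₀ R

/-- The generator of `multisetChains` corresponding to `τ` with coefficient `c`;
it is zero when `τ ∉ Δ` (or has the wrong size). -/
def multisetGen (R : Type*) [CommRing R] (Δ : Set (Multiset V)) (s : ℕ)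
    (τ : Multiset V) (c : R) : multisetChains R Δ s :=
  if h : τ ∈ Δ ∧ Multiset.card τ = s then Finsupp.single ⟨τ, h⟩ c else 0

/-- One term of the boundary: remove the element `x` (sitting at position `i` of
the sorted list of `σ`), with sign `(-1)^{d - ηᵢ}` where `d = s` is the degree
and `ηᵢ` is the number of later elements of the sorted list anticommuting
with `x` (elements `x`, `y` commute iff `s(x,y) ∈ E`). -/
def boundaryStep (R : Type*) [CommRing R] (Δ : Set (Multiset V)) (E : Set (Sym2 V))
    (s : ℕ) (σ : Multiset V) (x : V) (i : ℕ) : multisetChains R Δ s :=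
  multisetGen R Δ s (σ.erase x)
    ((-1 : R) ^ (s - ((σ.sort (· ≤ ·)).drop (i + 1)).countP
      (fun y => decide (s(x, y) ∉ E))))

/-- The boundary of the generator corresponding to a multiset of size `s + 1`. -/
def boundaryGen (R : Type*) [CommRing R] (Δ : Set (Multiset V)) (E : Set (Sym2 V))
    (s : ℕ) (σ : {σ : Multiset V // σ ∈ Δ ∧ Multiset.card σ = s + 1}) :
    multisetChains R Δ s :=
  ∑ i : Fin (s + 1),
    boundaryStep R Δ E s σ.1
      ((σ.1.sort (· ≤ ·)).get ⟨i.1, by rw [Multiset.length_sort, σ.2.2]; exact i.2⟩) i.1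

/-- The boundary operator of the multiset chain complex. -/
def multisetBoundary (R : Type*) [CommRing R] (Δ : Set (Multiset V)) (E : Set (Sym2 V))
    (s : ℕ) : multisetChains R Δ (s + 1) →ₗ[R] multisetChains R Δ s :=
  Finsupp.lsum R fun σ =>
    LinearMap.toSpanSingleton R (multisetChains R Δ s) (boundaryGen R Δ E s σ)

end

/-!
Sort `σ ∈ Δ` as `x₀ ≤ ⋯ ≤ x_{d+1}`. For `i ≠ k`, the terms of `∂ ∂ σ` deleting first `xᵢ`
then `xₖ`, and first `xₖ` then `xᵢ`, are multiples of the same generator `σ ∖ {xᵢ, xₖ}`. If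
that multiset is not in `Δ` both vanish, and by (A) it is not in `Δ` whenever an intermediate
face `σ ∖ {xᵢ}` is not. If it is in `Δ`, (B) forces `xᵢ` and `xₖ` to anticommute. Say `i < k`:
deleting `xᵢ` leaves the `η` of `xₖ` unchanged, while deleting `xₖ` lowers the `η` of `xᵢ` by
one, so the two terms have opposite signs and `∂ ∂ σ` cancels in pairs.
-/

namespace List

variable {α : Type*}

theorem coe_eraseIdx [DecidableEq α] (l : List α) (i : Fin l.length) :
    (l.eraseIdx i : Multiset α) = (l : Multiset α).erase l[i] := by
  rw [← Multiset.coe_eq_coe.2 (getElem_cons_eraseIdx_perm i.2), ← Multiset.cons_coe,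
    Fin.getElem_fin, Multiset.erase_cons_head]

theorem drop_eraseIdx_of_lt (l : List α) {i k : ℕ} (hik : i < k) (hi : i < l.length) :
    (l.eraseIdx i).drop k = l.drop (k + 1) := by
  induction l generalizing i k with
  | nil => simp at hi
  | cons a t ih =>
    obtain _ | k := k
    · omega
    obtain _ | i := i
    · simp
    · simpa using ih (by omega) (by simpa using hi)

theorem drop_eraseIdx_of_le (l : List α) {i k : ℕ} (hki : k ≤ i) :
    (l.eraseIdx i).drop k = (l.drop k).eraseIdx (i - k) := by
  induction l generalizing i k with
  | nil => simp
  | cons a t ih =>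
    obtain _ | k := k
    · simp
    obtain _ | i := i
    · omega
    · simpa using ih (by omega)

theorem countP_eraseIdx_add (p : α → Bool) (l : List α) {i : ℕ} (hi : i < l.length) :
    (l.eraseIdx i).countP p + (if p l[i] then 1 else 0) = l.countP p := by
  rw [← (getElem_cons_eraseIdx_perm hi).countP_eq p, countP_cons]

theorem countP_drop_eraseIdx_add_of_lt (p : α → Bool) (l : List α) {i k : ℕ} (hki : k < i)
    (hi : i < l.length) :
    ((l.eraseIdx i).drop (k + 1)).countP p + (if p l[i] then 1 else 0) =
      (l.drop (k + 1)).countP p := by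
  rw [drop_eraseIdx_of_le l hki,
    ← countP_eraseIdx_add p (l.drop (k + 1)) (i := i - (k + 1)) (by rw [length_drop]; omega),
    getElem_drop]
  simp only [Nat.add_sub_cancel' hki, Nat.succ_eq_add_one]

end List

theorem Finset.sum_sum_compl_singleton_eq_zero {ι M : Type*} [Fintype ι] [DecidableEq ι]
    [AddCommMonoid M] (f : ι → ι → M) (hf : ∀ i k, i ≠ k → f i k + f k i = 0) :
    ∑ i, ∑ k ∈ {i}ᶜ, f i k = 0 := by
  rw [Finset.sum_sigma']
  refine Finset.sum_involution (fun x _ => ⟨x.2, x.1⟩) ?_ ?_ ?_ ?_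
  · rintro ⟨i, k⟩ h
    exact hf i k (by simpa [eq_comm] using h)
  · rintro ⟨i, k⟩ h _ h'
    simp_all
  · rintro ⟨i, k⟩ h
    simpa [eq_comm] using h
  · simp

theorem Fin.sum_compl_singleton_eq_sum_skip {M : Type*} [AddCommMonoid M] {m n : ℕ}
    (h : m + 1 = n) (i : Fin n) (f : Fin n → M) :
    ∑ k ∈ {i}ᶜ, f k =
      ∑ j : Fin m,
        f ⟨if (j : ℕ) < i then j else j + 1, by have := j.2; split_ifs <;> omega⟩ := by
  have hne {k : Fin n} (hk : k ∈ ({i}ᶜ : Finset (Fin n))) : (k : ℕ) ≠ i := by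
    simpa [Fin.ext_iff] using hk
  refine Finset.sum_bij'
    (fun k hk => ⟨if (k : ℕ) < i then k else k - 1, by
      have := k.2; have := hne hk; split_ifs <;> omega⟩)
    (fun j _ => ⟨if (j : ℕ) < i then j else j + 1, by have := j.2; split_ifs <;> omega⟩)
    (fun _ _ => Finset.mem_univ _) ?_ ?_ ?_ ?_
  · intro j _
    simp only [Finset.mem_compl, Finset.mem_singleton, Fin.ext_iff]
    split_ifs <;> omega
  · intro k hk
    have := hne hk
    simp only [Fin.ext_iff]
    split_ifs <;> omega
  · intro j _
    simp only [Fin.ext_iff]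
    split_ifs <;> omega
  · intro k hk
    have := hne hk
    refine congrArg f ?_
    simp only [Fin.ext_iff]
    split_ifs <;> omega

theorem neg_one_pow_tsub {R : Type*} [Ring R] {m n : ℕ} (h : n ≤ m) :
    (-1 : R) ^ (m - n) = (-1) ^ (m + n) := by
  rw [show m + n = m - n + 2 * n by omega, pow_add, pow_mul]
  simp

theorem neg_one_pow_sub_mul_neg_one_pow_sub {R : Type*} [Ring R] {s a b : ℕ} (ha : a ≤ s + 1)
    (hb : b ≤ s) : (-1 : R) ^ (s + 1 - a) * (-1) ^ (s - b) = -(-1) ^ (a + b) := by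
  rw [neg_one_pow_tsub ha, neg_one_pow_tsub hb, ← pow_add,
    show s + 1 + a + (s + b) = a + b + 2 * s + 1 by ring, pow_succ, pow_add, pow_mul]
  simp

noncomputable section

variable {V : Type*} (R : Type*) [CommRing R] (Δ : Set (Multiset V)) (E : Set (Sym2 V))

theorem multisetGen_of_notMem {s : ℕ} {τ : Multiset V} (hτ : τ ∉ Δ) (c : R) :
    multisetGen R Δ s τ c = 0 :=
  dif_neg fun h => hτ h.1

theorem multisetGen_zero (s : ℕ) (τ : Multiset V) : multisetGen R Δ s τ 0 = 0 := by
  unfold multisetGen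
  split_ifs <;> simp

theorem multisetGen_add (s : ℕ) (τ : Multiset V) (c d : R) :
    multisetGen R Δ s τ c + multisetGen R Δ s τ d = multisetGen R Δ s τ (c + d) := by
  unfold multisetGen
  split_ifs <;> simp [Finsupp.single_add]

theorem smul_multisetGen (s : ℕ) (τ : Multiset V) (a c : R) :
    a • multisetGen R Δ s τ c = multisetGen R Δ s τ (a * c) := by
  unfold multisetGen
  split_ifs <;> simp [Finsupp.smul_single]

/-- The exponent `ηᵢ` of the boundary formula, for `x = l[i]`. -/
def anticommCount (l : List V) (i : ℕ) (x : V) : ℕ :=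
  (l.drop (i + 1)).countP fun y => decide (s(x, y) ∉ E)

theorem anticommCount_le (l : List V) (i : ℕ) (x : V) :
    anticommCount E l i x ≤ l.length - (i + 1) :=
  (List.countP_le_length).trans (List.length_drop).le

theorem anticommCount_eraseIdx_add (l : List V) {i j : ℕ} (hi : i < l.length) (x : V) :
    anticommCount E (l.eraseIdx i) j x + (if j < i ∧ s(x, l[i]) ∉ E then 1 else 0) =
      anticommCount E l (if j < i then j else j + 1) x := by
  unfold anticommCount
  by_cases hji : j < i
  · simpa [hji] using
      List.countP_drop_eraseIdx_add_of_lt (fun y => decide (s(x, y) ∉ E)) l hji hi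
  · simp only [hji, false_and, if_false, add_zero]
    rw [List.drop_eraseIdx_of_lt l (by omega) hi]


variable [LinearOrder V]

theorem multisetBoundary_single (s : ℕ) (σ : {σ : Multiset V // σ ∈ Δ ∧ σ.card = s + 1})
    (c : R) : multisetBoundary R Δ E s (Finsupp.single σ c) = c • boundaryGen R Δ E s σ := by
  simp [multisetBoundary, LinearMap.toSpanSingleton_apply]

theorem multisetBoundary_multisetGen {s : ℕ} {τ : Multiset V} (hτ : τ ∈ Δ)
    (hcard : τ.card = s + 1) (c : R) :
    multisetBoundary R Δ E s (multisetGen R Δ (s + 1) τ c) =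
      c • boundaryGen R Δ E s ⟨τ, hτ, hcard⟩ := by
  rw [multisetGen, dif_pos ⟨hτ, hcard⟩, multisetBoundary_single]

/-- The term of `∂ ∂ l` deleting `l[i]` and then `l[k]`. Its sign is `(-1)^(1 + ηᵢ + η')`, where
`η' = ηₖ - [k < i and l[k], l[i] anticommute]` is the exponent of `l[k]` once `l[i]` is gone. -/
def pairTerm (s : ℕ) (l : List V) (i k : Fin l.length) : multisetChains R Δ s :=
  multisetGen R Δ s (((l : Multiset V).erase l[i]).erase l[k])
    ((-1) ^ (anticommCount E l i l[i] + anticommCount E l k l[k]) *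
      if k < i ∧ s(l[k], l[i]) ∉ E then 1 else -1)

theorem pairTerm_add_pairTerm_swap
    (hB : ∀ σ ∈ Δ, ∀ x y : V, s(x, y) ∈ E → ({x, y} : Multiset V) ≤ σ →
      σ - ({x, y} : Multiset V) ∉ Δ)
    (s : ℕ) (l : List V) (hl : (l : Multiset V) ∈ Δ) {i k : Fin l.length} (hik : i ≠ k) :
    pairTerm R Δ E s l i k + pairTerm R Δ E s l k i = 0 := by
  simp only [pairTerm]
  set ρ := ((l : Multiset V).erase l[i]).erase l[k]
  have hρ : ((l : Multiset V).erase l[k]).erase l[i] = ρ := Multiset.erase_comm _ _ _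
  by_cases hρΔ : ρ ∈ Δ
  · have hsplit : (l : Multiset V) = {l[i], l[k]} + ρ := by
      have hk : l[k] ∈ (l : Multiset V).erase l[i] := by
        rw [← List.coe_eraseIdx l i, Multiset.mem_coe, List.mem_eraseIdx_iff_getElem]
        exact ⟨k, k.2, fun h => hik (Fin.ext h.symm), rfl⟩
      rw [Multiset.insert_eq_cons, Multiset.cons_add, Multiset.singleton_add,
        Multiset.cons_erase hk, Multiset.cons_erase (by simp)]
    have hanti : s(l[i], l[k]) ∉ E := fun hE =>
      hB _ hl _ _ hE (hsplit ▸ Multiset.le_add_right _ _)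
        (by rwa [hsplit, add_tsub_cancel_left])
    rw [hρ, multisetGen_add, ← multisetGen_zero R Δ s ρ]
    congr 1
    simp only [Fin.getElem_fin] at hanti ⊢
    rcases lt_or_gt_of_ne hik with h | h <;>
      simp [h, h.not_gt, hanti, Sym2.eq_swap, add_comm]
  · simp only [hρ, multisetGen_of_notMem R Δ hρΔ, add_zero]

theorem boundaryStep_eq (s : ℕ) (σ : Multiset V) (x : V) (i : ℕ) :
    boundaryStep R Δ E s σ x i =
      multisetGen R Δ s (σ.erase x) ((-1) ^ (s - anticommCount E (σ.sort (· ≤ ·)) i x)) :=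
  rfl

theorem sort_erase_getElem {σ : Multiset V} {l : List V} (hsort : σ.sort (· ≤ ·) = l)
    (i : Fin l.length) : (σ.erase l[i]).sort (· ≤ ·) = l.eraseIdx i := by
  have hl : (l : Multiset V) = σ := hsort ▸ Multiset.sort_eq _ _
  rw [← hl, ← List.coe_eraseIdx, Multiset.coe_sort, List.mergeSort_eq_self]
  exact (hsort ▸ Multiset.pairwise_sort σ _).sublist (List.eraseIdx_sublist _ _)

theorem smul_boundaryStep_erase_eq_pairTerm {s : ℕ} {σ : Multiset V} {l : List V}
    (hsort : σ.sort (· ≤ ·) = l) (hlen : l.length = s + 2) (i k : Fin l.length) {j : ℕ}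
    (hj : j < (l.eraseIdx i).length)
    (hkj : (k : ℕ) = if j < i then j else j + 1) :
    (-1 : R) ^ (s + 1 - anticommCount E l i l[i]) •
        boundaryStep R Δ E s (σ.erase l[i]) (l.eraseIdx i)[j] j =
      pairTerm R Δ E s l i k := by
  have hl : (l : Multiset V) = σ := hsort ▸ Multiset.sort_eq _ _
  have hget : (l.eraseIdx i)[j] = l[k] := by
    rw [List.getElem_eraseIdx]
    simp only [Fin.getElem_fin, hkj]
    split_ifs <;> rfl
  have hki : k < i ↔ j < i := by
    rw [Fin.lt_def, hkj]
    split_ifs <;> omega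
  have hcount := anticommCount_eraseIdx_add E l (j := j) i.2 l[k]
  rw [← hkj] at hcount
  have hbi := anticommCount_le E l i l[i]
  have hbj := anticommCount_le E (l.eraseIdx i) j l[k]
  rw [List.length_eraseIdx_of_lt i.2] at hbj
  rw [hget, boundaryStep_eq, sort_erase_getElem hsort, smul_multisetGen, pairTerm, hl]
  simp only [hki]
  congr 1
  simp only [Fin.getElem_fin] at *
  rw [neg_one_pow_sub_mul_neg_one_pow_sub (by omega) (by omega), ← hcount]
  split_ifs <;> simp [← add_assoc, pow_succ]

theorem multisetBoundary_boundaryStep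
    (hA : ∀ σ τ ρ : Multiset V, σ ∈ Δ → τ ∈ Δ → σ ≤ ρ → ρ ≤ τ → ρ ∈ Δ)
    {s : ℕ} {σ : Multiset V} (hσ : σ ∈ Δ) (hcard : σ.card = s + 2)
    {l : List V} (hsort : σ.sort (· ≤ ·) = l) (i : Fin l.length) :
    multisetBoundary R Δ E s (boundaryStep R Δ E (s + 1) σ l[i] i) =
      ∑ k ∈ {i}ᶜ, pairTerm R Δ E s l i k := by
  have hl : (l : Multiset V) = σ := hsort ▸ Multiset.sort_eq _ _
  have hlen : l.length = s + 2 := by rw [← hsort, Multiset.length_sort, hcard]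
  by_cases hτ : σ.erase l[i] ∈ Δ
  · have hτcard : (σ.erase l[i]).card = s + 1 := by
      rw [Multiset.card_erase_of_mem (by simp [← hl]), hcard]
      rfl
    rw [boundaryStep_eq, hsort, multisetBoundary_multisetGen R Δ E hτ hτcard, boundaryGen,
      Finset.smul_sum, Fin.sum_compl_singleton_eq_sum_skip hlen.symm]
    refine Finset.sum_congr rfl fun j _ => ?_
    rw [List.get_eq_getElem, List.getElem_of_eq (sort_erase_getElem hsort i)]
    exact smul_boundaryStep_erase_eq_pairTerm R Δ E hsort hlen i _ _ rfl
  · rw [boundaryStep_eq, multisetGen_of_notMem R Δ hτ, map_zero]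
    simp only [pairTerm, hl]
    refine (Finset.sum_eq_zero fun k _ => multisetGen_of_notMem R Δ (fun h => hτ ?_) _).symm
    exact hA _ _ _ h hσ (Multiset.erase_le _ _) (Multiset.erase_le _ _)
end

theorem stmt_4_general {V : Type*} [LinearOrder V] (R : Type*) [CommRing R]
    (Δ : Set (Multiset V)) (E : Set (Sym2 V))
    (hA : ∀ σ τ ρ : Multiset V, σ ∈ Δ → τ ∈ Δ → σ ≤ ρ → ρ ≤ τ → ρ ∈ Δ)
    (hB : ∀ σ ∈ Δ, ∀ x y : V, s(x, y) ∈ E → ({x, y} : Multiset V) ≤ σ →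
      σ - ({x, y} : Multiset V) ∉ Δ) :
    ∀ s : ℕ, (multisetBoundary R Δ E s).comp (multisetBoundary R Δ E (s + 1)) = 0 := by
  intro s
  refine Finsupp.lhom_ext fun σ c => ?_
  set l := σ.1.sort (· ≤ ·)
  have hlen : s + 1 + 1 = l.length := by rw [Multiset.length_sort, σ.2.2]
  rw [LinearMap.comp_apply, multisetBoundary_single, map_smul, boundaryGen, map_sum,
    LinearMap.zero_apply, ← smul_zero c]
  congr 1
  calc _ = ∑ i : Fin l.length,
          multisetBoundary R Δ E s (boundaryStep R Δ E (s + 1) σ.1 l[i] i) :=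
        Fin.sum_congr' _ hlen
    _ = ∑ i, ∑ k ∈ {i}ᶜ, pairTerm R Δ E s l i k :=
        Finset.sum_congr rfl fun i _ => multisetBoundary_boundaryStep R Δ E hA σ.2.1 σ.2.2 rfl i
    _ = 0 := Finset.sum_sum_compl_singleton_eq_zero _ fun i k hik =>
        pairTerm_add_pairTerm_swap R Δ E hB s l (by simpa [l] using σ.2.1) hik

/-- Let `V` be a totally ordered set, `E` a set of unordered pairs of elements
of `V` (`x` and `y` commute iff `s(x,y) ∈ E`), and `Δ` a family of multisets
over `V` satisfying: (A) `Δ` is closed under intermediate multisets; (B) if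
`x`, `y` commute and `{x,y} ⊆ σ ∈ Δ`, then `σ ∖ {x,y} ∉ Δ`; (C) any element of
multiplicity `≥ 2` in a member of `Δ` commutes with itself.  Then the boundary
operator defined above satisfies `∂ ∘ ∂ = 0`, i.e. `(C_*, ∂)` is a chain
complex. -/
theorem stmt_4 {V : Type*} [LinearOrder V] (R : Type*) [CommRing R]
    (Δ : Set (Multiset V)) (E : Set (Sym2 V))
    (hA : ∀ σ τ ρ : Multiset V, σ ∈ Δ → τ ∈ Δ → σ ≤ ρ → ρ ≤ τ → ρ ∈ Δ)
    (hB : ∀ σ ∈ Δ, ∀ x y : V, s(x, y) ∈ E → ({x, y} : Multiset V) ≤ σ →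
      σ - ({x, y} : Multiset V) ∉ Δ)
    (hC : ∀ σ ∈ Δ, ∀ x : V, 2 ≤ σ.count x → s(x, x) ∈ E) :
    ∀ s : ℕ, (multisetBoundary R Δ E s).comp (multisetBoundary R Δ E (s + 1)) = 0 :=
  stmt_4_general R Δ E hA hB
end

section
/- Let λ = (λ₁,…,λ_r) be positive integers, s = (s₁,…,s_r) a sign vector, and Δ_{λ,s} the family of multisets σ of edges and loops on {1,…,r} such that: (i) 0 ≤ deg_σ(a) ≤ λ_a for positively charged a; (ii) λ_a − 1 ≤ deg_σ(a) ≤ λ_a and no loop aa appears, for negatively charged a; (iii) no edge ab appears more than once unless a and b have opposite charges. With the commutation relation where two edges commute iff their intersection contains exactly one negatively charged element (and loops anticommute with everything), Δ_{λ,s} satisfies conditions (A), (B), (C): (A) it is closed under intermediate multisets; (B) removing two commuting edges from a member leaves a non-member; (C) any edge or loop repeated in a member commutes with itself. -/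
/-- The degree of the vertex `a` in a multiset `σ` of edges and loops on
`{1,…,r}`: the number of occurrences of `a` among all edges and loops of `σ`
(a loop `aa` contributes `2`). -/
def multidegree {r : ℕ} (σ : Multiset (Sym2 (Fin r))) (a : Fin r) : ℕ :=
  (σ.map (fun e => if e = s(a, a) then 2 else if a ∈ e then 1 else 0)).sum

/-- The family `Δ_{λ,s}` of multisets of edges and loops on `{1,…,r}`
(`ss a = true` means `a` is positively charged, `ss a = false` negatively):
(i) `deg_σ(a) ≤ λ_a` for positively charged `a`;
(ii) `λ_a - 1 ≤ deg_σ(a) ≤ λ_a` and no loop `aa`, for negatively charged `a`;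
(iii) no edge appears more than once unless its two endpoints have opposite
charges. -/
def deltaFamily (r : ℕ) (lam : Fin r → ℕ) (ss : Fin r → Bool) :
    Set (Multiset (Sym2 (Fin r))) :=
  {σ | (∀ a : Fin r, ss a = true → multidegree σ a ≤ lam a) ∧
       (∀ a : Fin r, ss a = false →
          lam a - 1 ≤ multidegree σ a ∧ multidegree σ a ≤ lam a ∧ s(a, a) ∉ σ) ∧
       (∀ e : Sym2 (Fin r), 2 ≤ σ.count e → ∃ a b : Fin r, e = s(a, b) ∧ ss a ≠ ss b)}

/-- The commutation relation `E_{λ,s}`: two edges commute iff neither is a loop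
and their intersection contains exactly one negatively charged vertex (loops
anticommute with everything). -/
def commuteFamily (r : ℕ) (ss : Fin r → Bool) : Set (Sym2 (Sym2 (Fin r))) :=
  {q | ∃ e f : Sym2 (Fin r), q = s(e, f) ∧ ¬ e.IsDiag ∧ ¬ f.IsDiag ∧
        (∃! a : Fin r, a ∈ e ∧ a ∈ f ∧ ss a = false)}

section
variable {r : ℕ}

lemma multidegree_add (σ τ : Multiset (Sym2 (Fin r))) (a : Fin r) :
    multidegree (σ + τ) a = multidegree σ a + multidegree τ a := by
  simp [multidegree]

lemma multidegree_mono {σ τ : Multiset (Sym2 (Fin r))} (h : σ ≤ τ) (a : Fin r) :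
    multidegree σ a ≤ multidegree τ a := by
  obtain ⟨υ, rfl⟩ := Multiset.le_iff_exists_add.mp h
  simp [multidegree_add]

lemma multidegree_pair {e f : Sym2 (Fin r)} {a : Fin r} (he : ¬ e.IsDiag) (hf : ¬ f.IsDiag)
    (hae : a ∈ e) (haf : a ∈ f) : multidegree {e, f} a = 2 := by
  have hne : e ≠ s(a, a) := by rintro rfl; exact he rfl
  have hnf : f ≠ s(a, a) := by rintro rfl; exact hf rfl
  simp [multidegree, hne, hnf, hae, haf]

lemma deltaFamily_ordConnected (lam : Fin r → ℕ) (ss : Fin r → Bool) :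
    (deltaFamily r lam ss).OrdConnected := by
  refine ⟨?_⟩
  rintro σ ⟨-, hσneg, -⟩ τ ⟨hτpos, hτneg, hτrep⟩ ρ ⟨hσρ, hρτ⟩
  refine ⟨fun a ha => (multidegree_mono hρτ a).trans (hτpos a ha),
    fun a ha => ⟨(hσneg a ha).1.trans (multidegree_mono hσρ a),
      (multidegree_mono hρτ a).trans (hτneg a ha).2.1,
      fun h => (hτneg a ha).2.2 (Multiset.mem_of_le hρτ h)⟩,
    fun e h => hτrep e (h.trans (Multiset.count_le_of_le e hρτ))⟩

/-- The degree at `a` drops by two, but membership in `Δ_{λ,s}` confines it to the window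
`[λ_a - 1, λ_a]`. -/
lemma sub_pair_notMem_deltaFamily {lam : Fin r → ℕ} {ss : Fin r → Bool}
    {σ : Multiset (Sym2 (Fin r))} (hσ : σ ∈ deltaFamily r lam ss) {e f : Sym2 (Fin r)}
    (he : ¬ e.IsDiag) (hf : ¬ f.IsDiag) {a : Fin r} (hae : a ∈ e) (haf : a ∈ f)
    (hneg : ss a = false) (hsub : {e, f} ≤ σ) : σ - {e, f} ∉ deltaFamily r lam ss := by
  intro hmem
  have hdeg : multidegree σ a = multidegree (σ - {e, f}) a + 2 := by
    conv_lhs => rw [← tsub_add_cancel_of_le hsub]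
    rw [multidegree_add, multidegree_pair he hf hae haf]
  have hupper := (hσ.2.1 a hneg).2.1
  have hlower := (hmem.2.1 a hneg).1
  omega

lemma exists_common_negative_of_mem_commuteFamily {ss : Fin r → Bool} {e f : Sym2 (Fin r)}
    (h : s(e, f) ∈ commuteFamily r ss) :
    ¬ e.IsDiag ∧ ¬ f.IsDiag ∧ ∃ a, a ∈ e ∧ a ∈ f ∧ ss a = false := by
  obtain ⟨e', f', hq, he', hf', a, ⟨hae', haf', hneg⟩, -⟩ := h
  rcases Sym2.eq_iff.mp hq with ⟨rfl, rfl⟩ | ⟨rfl, rfl⟩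
  · exact ⟨he', hf', a, hae', haf', hneg⟩
  · exact ⟨hf', he', a, haf', hae', hneg⟩

lemma mk_self_mem_commuteFamily {ss : Fin r → Bool} {a b : Fin r} (hab : ss a ≠ ss b) :
    s(s(a, b), s(a, b)) ∈ commuteFamily r ss := by
  have hd : ¬ s(a, b).IsDiag := by
    rw [Sym2.mk_isDiag_iff]; rintro rfl; exact hab rfl
  refine ⟨s(a, b), s(a, b), rfl, hd, hd, ?_⟩
  simp only [and_self_left]
  cases ha : ss a <;> cases hb : ss b
  · exact absurd (ha.trans hb.symm) hab
  · refine ⟨a, ⟨Sym2.mem_mk_left a b, ha⟩, fun c ⟨hc, hcneg⟩ => ?_⟩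
    rcases Sym2.mem_iff.mp hc with rfl | rfl
    · rfl
    · simp [hb] at hcneg
  · refine ⟨b, ⟨Sym2.mem_mk_right a b, hb⟩, fun c ⟨hc, hcneg⟩ => ?_⟩
    rcases Sym2.mem_iff.mp hc with rfl | rfl
    · simp [ha] at hcneg
    · rfl
  · exact absurd (ha.trans hb.symm) hab

end

theorem stmt_5_general (r : ℕ) (lam : Fin r → ℕ)
    (ss : Fin r → Bool) :
    -- (A)
    (∀ σ τ ρ : Multiset (Sym2 (Fin r)), σ ∈ deltaFamily r lam ss →
      τ ∈ deltaFamily r lam ss → σ ≤ ρ → ρ ≤ τ → ρ ∈ deltaFamily r lam ss) ∧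
    -- (B)
    (∀ σ ∈ deltaFamily r lam ss, ∀ e f : Sym2 (Fin r),
      s(e, f) ∈ commuteFamily r ss → ({e, f} : Multiset (Sym2 (Fin r))) ≤ σ →
      σ - ({e, f} : Multiset (Sym2 (Fin r))) ∉ deltaFamily r lam ss) ∧
    -- (C)
    (∀ σ ∈ deltaFamily r lam ss, ∀ e : Sym2 (Fin r), 2 ≤ σ.count e →
      s(e, e) ∈ commuteFamily r ss) := by
  refine ⟨fun σ τ ρ hσ hτ hσρ hρτ => (deltaFamily_ordConnected lam ss).out hσ hτ ⟨hσρ, hρτ⟩,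
    fun σ hσ e f hef hsub => ?_, fun σ hσ e he => ?_⟩
  · obtain ⟨he, hf, a, hae, haf, hneg⟩ := exists_common_negative_of_mem_commuteFamily hef
    exact sub_pair_notMem_deltaFamily hσ he hf hae haf hneg hsub
  · obtain ⟨a, b, rfl, hab⟩ := hσ.2.2 e he
    exact mk_self_mem_commuteFamily hab

/-- The family `Δ_{λ,s}` satisfies, with respect to the commutation relation
`E_{λ,s}`, the conditions (A), (B), (C) of the multiset chain complex
construction: (A) closure under intermediate multisets; (B) removing two
commuting edges from a member leaves a non-member; (C) any repeated edge or
loop in a member commutes with itself. -/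
theorem stmt_5 (r : ℕ) (lam : Fin r → ℕ) (hlam : ∀ a, 0 < lam a)
    (ss : Fin r → Bool) :
    -- (A)
    (∀ σ τ ρ : Multiset (Sym2 (Fin r)), σ ∈ deltaFamily r lam ss →
      τ ∈ deltaFamily r lam ss → σ ≤ ρ → ρ ≤ τ → ρ ∈ deltaFamily r lam ss) ∧
    -- (B)
    (∀ σ ∈ deltaFamily r lam ss, ∀ e f : Sym2 (Fin r),
      s(e, f) ∈ commuteFamily r ss → ({e, f} : Multiset (Sym2 (Fin r))) ≤ σ →
      σ - ({e, f} : Multiset (Sym2 (Fin r))) ∉ deltaFamily r lam ss) ∧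
    -- (C)
    (∀ σ ∈ deltaFamily r lam ss, ∀ e : Sym2 (Fin r), 2 ≤ σ.count e →
      s(e, e) ∈ commuteFamily r ss) :=
  stmt_5_general r lam ss
end

section
/- In the chain complex X^λ with all-minus signs realized as C(λ⁻;R): if γ = e₀∧⋯∧e_d ⊗ v₁∧⋯∧v_t is a generator with e_i = x_iy_i (x_i < y_i), and γ_i is obtained from γ by deleting e_i and prepending x_i∧y_i to the vertex part, then the number of adjacent-transposition sign changes needed to sort the concatenated vertex sequence of γ_i from that of γ satisfies: sgn(γ_i) = (−1)^{d−η_i}·(−1)^i·sgn(γ), where η_i is the number of edges among e_{i+1},…,e_d disjoint from e_i. Equivalently, 4(d−i) − ((d−i) − η_i) ≡ i + d − η_i (mod 2). -/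
/-!
The vertex sequences of `γ` and `γᵢ` are `⟨A⟩ xᵢ yᵢ ⟨B⟩ v` and `⟨A⟩ ⟨B⟩ xᵢ yᵢ v`, where `⟨B⟩`
lists the vertices of `e_{i+1}, …, e_d`. Moving the block `xᵢ yᵢ` past `⟨B⟩` changes the inversion
count by the difference of the cross-inversions of `xᵢ yᵢ` against `⟨B⟩` in the two orders, which has
the parity of their sum: the `4(d-i)` pairs minus the pairs of equal letters. Since the edges are
distinct and oriented upwards, every later edge shares at most one vertex with `eᵢ`, and none exactly
when it is disjoint from `eᵢ`, so there are `(d-i) - ηᵢ` equal pairs.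
-/

open scoped Classical

section

variable (r : ℕ)

/-- The lexicographic (strict) order on edges, given as ordered pairs. -/
def edgePairLt (e f : Fin r × Fin r) : Prop :=
  e.1 < f.1 ∨ (e.1 = f.1 ∧ e.2 < f.2)

/-- The concatenated vertex sequence `⟨γ⟩ = (x₀,y₀,…,x_d,y_d,v₁,…,v_t)` of a
generator `γ = (edge list, vertex list)`. -/
def vertexSeq (p : List (Fin r × Fin r) × List (Fin r)) : List (Fin r) :=
  p.1.foldr (fun e l => e.1 :: e.2 :: l) p.2

/-- The number of inversions of a list. -/
def invCount (l : List (Fin r)) : ℕ :=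
  ∑ i : Fin l.length, ∑ j : Fin l.length,
    if i.1 < j.1 ∧ l.get j < l.get i then 1 else 0

/-- Two edges are disjoint when they share no vertex. -/
def pairDisjoint (e f : Fin r × Fin r) : Prop :=
  ∀ a : Fin r, (a = e.1 ∨ a = e.2) → ¬ (a = f.1 ∨ a = f.2)

end

section CrossInversions

variable {α : Type*} [LinearOrder α]

def crossInv (u w : List α) : ℕ :=
  (u.map fun a => w.countP (· < a)).sum

lemma crossInv_cons_left (a : α) (u w : List α) :
    crossInv (a :: u) w = w.countP (· < a) + crossInv u w := by
  simp [crossInv]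

lemma crossInv_append_left (u u' w : List α) :
    crossInv (u ++ u') w = crossInv u w + crossInv u' w := by
  simp [crossInv]

lemma crossInv_append_right (u w w' : List α) :
    crossInv u (w ++ w') = crossInv u w + crossInv u w' := by
  simp [crossInv, List.countP_append, List.sum_map_add]

lemma crossInv_cons_right (b : α) (u w : List α) :
    crossInv u (b :: w) = u.countP (b < ·) + crossInv u w := by
  rw [← List.singleton_append, crossInv_append_right]
  congr 1
  induction u with
  | nil => rfl
  | cons a u ih => simp [crossInv_cons_left, List.countP_cons, ih, add_comm]

lemma countP_lt_add_countP_gt_add_count (x : α) (l : List α) :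
    l.countP (· < x) + l.countP (x < ·) + l.count x = l.length := by
  induction l with
  | nil => rfl
  | cons a l ih =>
    simp only [List.countP_cons, List.count_cons, List.length_cons]
    rcases lt_trichotomy a x with h | rfl | h
    · simp [h, h.ne, h.not_gt]; omega
    · simp; omega
    · simp [h, h.ne', h.not_gt]; omega

/-- Each pair of positions in `u × w` is an inversion of `u ++ w`, of `w ++ u`, or a pair of
equal letters. -/
lemma crossInv_add_crossInv_swap (u w : List α) :
    crossInv u w + crossInv w u + (u.map w.count).sum = u.length * w.length := by
  induction u with
  | nil => simp [crossInv]
  | cons a u ih =>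
    have := countP_lt_add_countP_gt_add_count a w
    simp only [crossInv_cons_left, crossInv_cons_right, List.map_cons, List.sum_cons,
      List.length_cons]
    rw [Nat.succ_mul]
    omega

end CrossInversions

section Inversions

variable {r : ℕ}

lemma countP_eq_sum_ite {α : Type*} (p : α → Bool) (l : List α) :
    l.countP p = ∑ j : Fin l.length, if p (l.get j) then 1 else 0 := by
  induction l with
  | nil => simp
  | cons a l ih =>
    simp only [List.length_cons]
    rw [Fin.sum_univ_succ, List.countP_cons]
    simp only [List.get_cons_succ', List.get_cons_zero, ← ih]
    by_cases hp : p a = true <;> simp only [hp, ↓reduceIte] <;> omega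

lemma invCount_cons (a : Fin r) (l : List (Fin r)) :
    invCount r (a :: l) = l.countP (· < a) + invCount r l := by
  unfold invCount
  simp only [List.length_cons]
  rw [Fin.sum_univ_succ, countP_eq_sum_ite]
  congr 1
  · rw [Fin.sum_univ_succ]
    simp
  · rw [Finset.sum_congr rfl (fun i _ => Fin.sum_univ_succ _)]
    simp

lemma invCount_append (u w : List (Fin r)) :
    invCount r (u ++ w) = invCount r u + invCount r w + crossInv u w := by
  induction u with
  | nil => simp [invCount, crossInv]
  | cons a u ih =>
    simp only [List.cons_append, invCount_cons, ih, List.countP_append, crossInv_cons_left]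
    omega

lemma invCount_swap_blocks (u w s t : List (Fin r)) :
    invCount r (u ++ w ++ s ++ t) + crossInv s w =
      invCount r (u ++ s ++ w ++ t) + crossInv w s := by
  simp only [invCount_append, crossInv_append_left]
  omega

end Inversions

section Edges

variable {r : ℕ}

instance edgePairLt.isTrans : IsTrans (Fin r × Fin r) (edgePairLt r) where
  trans := by
    rintro a b c (h | ⟨h1, h2⟩) (g | ⟨g1, g2⟩)
    · exact Or.inl (h.trans g)
    · exact Or.inl (g1 ▸ h)
    · exact Or.inl (h1 ▸ g)
    · exact Or.inr ⟨h1.trans g1, h2.trans g2⟩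

instance edgePairLt.irrefl : Std.Irrefl (edgePairLt r) where
  irrefl e h := by rcases h with h | ⟨_, h⟩ <;> exact lt_irrefl _ h

def edgeVertices (L : List (Fin r × Fin r)) : List (Fin r) :=
  L.flatMap fun e => [e.1, e.2]

lemma vertexSeq_eq_edgeVertices_append (L : List (Fin r × Fin r)) (v : List (Fin r)) :
    vertexSeq r (L, v) = edgeVertices L ++ v := by
  induction L with
  | nil => rfl
  | cons e L ih => simpa [vertexSeq, edgeVertices] using ih

lemma length_edgeVertices (L : List (Fin r × Fin r)) :
    (edgeVertices L).length = 2 * L.length := by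
  induction L with
  | nil => rfl
  | cons e L ih => simp_all [edgeVertices]; omega

lemma vertexSeq_eq_take_getElem_drop (L : List (Fin r × Fin r)) (v : List (Fin r)) {i : ℕ}
    (hi : i < L.length) :
    vertexSeq r (L, v) =
      edgeVertices (L.take i) ++ [L[i].1, L[i].2] ++ edgeVertices (L.drop (i + 1)) ++ v := by
  have hsplit : L = L.take i ++ L[i] :: L.drop (i + 1) := by simp
  rw [vertexSeq_eq_edgeVertices_append]
  nth_rw 1 [hsplit]
  simp only [edgeVertices, List.flatMap_append, List.flatMap_cons, List.append_assoc,
    List.cons_append, List.nil_append]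

lemma vertexSeq_eraseIdx (L : List (Fin r × Fin r)) (i : ℕ) (w : List (Fin r)) :
    vertexSeq r (L.eraseIdx i, w) =
      edgeVertices (L.take i) ++ edgeVertices (L.drop (i + 1)) ++ w := by
  rw [vertexSeq_eq_edgeVertices_append, List.eraseIdx_eq_take_drop_succ]
  simp [edgeVertices]

/-- An edge `f ≠ e` meets `e` in at most one vertex (the orientations rule out `f = (e.2, e.1)`),
and in none iff it is disjoint from `e`. -/
lemma count_add_count_add_ite_pairDisjoint {e f : Fin r × Fin r} (he : e.1 < e.2)
    (hf : f.1 < f.2) (hne : f ≠ e) :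
    [f.1, f.2].count e.1 + [f.1, f.2].count e.2 + (if pairDisjoint r e f then 1 else 0) = 1 := by
  obtain ⟨p, q⟩ := e
  obtain ⟨a, b⟩ := f
  simp only [pairDisjoint, List.count_cons, List.count_nil] at *
  by_cases hap : a = p <;> by_cases hbp : b = p <;> by_cases haq : a = q <;>
    by_cases hbq : b = q <;> simp_all <;> omega

lemma count_add_count_add_countP_pairDisjoint {e : Fin r × Fin r} (he : e.1 < e.2)
    (L : List (Fin r × Fin r)) (hL : ∀ f ∈ L, f.1 < f.2) (heL : e ∉ L) :
    (edgeVertices L).count e.1 + (edgeVertices L).count e.2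
      + L.countP (fun f => pairDisjoint r e f) = L.length := by
  induction L with
  | nil => rfl
  | cons f L ih =>
    have hf := count_add_count_add_ite_pairDisjoint he (hL f (by simp)) (by grind)
    have := ih (fun g hg => hL g (by simp [hg])) (by grind)
    simp only [edgeVertices, List.flatMap_cons, List.count_append, List.countP_cons,
      List.length_cons] at *
    simp only [decide_eq_true_eq]
    omega

lemma crossInv_add_crossInv_edgeVertices {e : Fin r × Fin r} (he : e.1 < e.2)
    (L : List (Fin r × Fin r)) (hL : ∀ f ∈ L, f.1 < f.2) (heL : e ∉ L) :
    crossInv [e.1, e.2] (edgeVertices L) + crossInv (edgeVertices L) [e.1, e.2]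
      + (L.length - L.countP (fun f => pairDisjoint r e f)) = 4 * L.length := by
  have hcross := crossInv_add_crossInv_swap [e.1, e.2] (edgeVertices L)
  have hcount := count_add_count_add_countP_pairDisjoint he L hL heL
  simp only [List.map_cons, List.map_nil, List.sum_cons, List.sum_nil, List.length_cons,
    List.length_nil, length_edgeVertices] at hcross
  omega

end Edges

/-- For a canonical generator `γ = e₀ ∧ ⋯ ∧ e_d ⊗ v₁ ∧ ⋯ ∧ v_t` of `X^λ`
(edges strictly increasing with `xᵢ < yᵢ`, vertex list strictly increasing),
let `γᵢ` be obtained by deleting the edge `eᵢ = (xᵢ,yᵢ)` and prepending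
`xᵢ ∧ yᵢ` to the vertex part.  With `sgn = (-1)^{inv⟨·⟩}` and `ηᵢ` the number
of edges among `e_{i+1},…,e_d` disjoint from `eᵢ`, one has
`sgn(γᵢ) = (-1)^{d-ηᵢ}·(-1)^i·sgn(γ)`; equivalently,
`4(d-i) - ((d-i) - ηᵢ) ≡ i + d - ηᵢ (mod 2)`. -/
theorem stmt_10 (r d : ℕ) (edges : List (Fin r × Fin r)) (v : List (Fin r))
    (h1 : edges.Chain' (edgePairLt r)) (h2 : ∀ e ∈ edges, e.1 < e.2)
    (hlen : edges.length = d + 1) (i : Fin (d + 1)) :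
    let e := edges.get ⟨i.1, by rw [hlen]; exact i.2⟩
    let ηi := (edges.drop (i.1 + 1)).countP (fun f => decide (pairDisjoint r e f))
    ((-1 : ℤ) ^ invCount r (vertexSeq r (edges.eraseIdx i.1, e.1 :: e.2 :: v)) =
      (-1) ^ (d - ηi) * (-1) ^ i.1 * (-1) ^ invCount r (vertexSeq r (edges, v))) ∧
    Nat.ModEq 2 (4 * (d - i.1) - ((d - i.1) - ηi)) (i.1 + d - ηi) := by
  intro e ηi
  have hi : i.1 < edges.length := by omega
  set A := edges.take i.1
  set B := edges.drop (i.1 + 1)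
  have hB : B.length = d - i.1 := by simp [B, hlen]
  have he : e.1 < e.2 := h2 e (List.getElem_mem hi)
  have heB : e ∉ B := by
    have hnodup := (List.isChain_iff_pairwise.mp h1).nodup.sublist (List.drop_sublist i.1 edges)
    rw [← List.cons_getElem_drop_succ (h := hi)] at hnodup
    exact (List.nodup_cons.mp hnodup).1
  have hvγ : vertexSeq r (edges, v) = edgeVertices A ++ [e.1, e.2] ++ edgeVertices B ++ v :=
    vertexSeq_eq_take_getElem_drop edges v hi
  have hvγi : vertexSeq r (edges.eraseIdx i.1, e.1 :: e.2 :: v) =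
      edgeVertices A ++ edgeVertices B ++ [e.1, e.2] ++ v := by
    simp [vertexSeq_eraseIdx, A, B]
  have hswap := invCount_swap_blocks (edgeVertices A) [e.1, e.2] (edgeVertices B) v
  have hcross := crossInv_add_crossInv_edgeVertices he B
    (fun f hf => h2 f (List.mem_of_mem_drop hf)) heB
  have hηB : ηi = B.countP (fun f => pairDisjoint r e f) := rfl
  have hη : ηi ≤ d - i.1 := hB ▸ List.countP_le_length
  rw [hvγ, hvγi, ← pow_add, ← pow_add]
  refine ⟨neg_one_pow_congr ?_, ?_⟩
  · simp only [Nat.even_iff]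
    omega
  · unfold Nat.ModEq
    omega
end
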